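/- Let M₁, M₂ be matroids on V, S ∈ I₁ ∩ I₂, and suppose the exchange graph G(S) has shortest s–t distance 2(ℓ+1). If Π and Π̃ are two maximal augmenting sets in G(S) with widths w and w̃ respectively, then w̃ ≤ (2ℓ+4)·w. -/

import Mathlib

open Classical

noncomputable section

structure FinMatroid (α : Type*) where
  Indep : Finset α → Prop
  empty_indep : Indep ∅
  subset_indep : ∀ ⦃A B : Finset α⦄, Indep A → B ⊆ A → Indep B
  exchange : ∀ ⦃A B : Finset α⦄, Indep A → Indep B → A.card < B.card →
    ∃ b ∈ B \ A, Indep (insert b A)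

variable {α : Type*} [DecidableEq α]

/-- The rank of a set `T`: the maximum cardinality of an independent subset of `T`. -/
def FinMatroid.rank (M : FinMatroid α) (T : Finset α) : ℕ :=
  (T.powerset.filter fun A => M.Indep A).sup Finset.card

/-- Vertices of the exchange graph: a source `src`, a sink `snk`, and the ground elements. -/
inductive EGV (α : Type*) where
  | src : EGV α
  | snk : EGV α
  | el : α → EGV α

/-- Arcs of the exchange graph `G(S)` for `S ∈ I₁ ∩ I₂`. -/
def egAdj (M₁ M₂ : FinMatroid α) (S : Finset α) : EGV α → EGV α → Prop
  | EGV.src, EGV.el b => b ∉ S ∧ M₁.Indep (insert b S)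
  | EGV.el b, EGV.snk => b ∉ S ∧ M₂.Indep (insert b S)
  | EGV.el x, EGV.el y =>
      (x ∈ S ∧ y ∉ S ∧ M₁.Indep (insert y (S.erase x))) ∨
      (x ∉ S ∧ y ∈ S ∧ M₂.Indep (insert x (S.erase y)))
  | _, _ => False

/-- Directed shortest-path distance in the exchange graph (number of arcs), `⊤` if unreachable. -/
def egDist (M₁ M₂ : FinMatroid α) (S : Finset α) (u v : EGV α) : ℕ∞ :=
  sInf {n : ℕ∞ | ∃ l : List (EGV α),
    List.Chain' (egAdj M₁ M₂ S) (u :: (l ++ [v])) ∧ n = (l.length : ℕ∞) + 1}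

/-- An augmenting set `(B 1, A 1, B 2, …, A ℓ, B (ℓ+1))` of width `w` in the exchange graph
`G(S)`: pairwise disjoint sets with `A k ⊆ D_{2k}`, `B k ⊆ D_{2k-1}` (distance layers from the
source), all of cardinality `w`, with `S + B₁ ∈ I₁`, `S + B_{ℓ+1} ∈ I₂`,
`S − A_k + B_{k+1} ∈ I₁` and `S − A_k + B_k ∈ I₂`. -/
def IsAugSet (M₁ M₂ : FinMatroid α) (S : Finset α) (ℓ w : ℕ)
    (A B : ℕ → Finset α) : Prop :=
  (∀ k ∈ Finset.Icc 1 ℓ, ∀ a ∈ A k,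
      egDist M₁ M₂ S EGV.src (EGV.el a) = ((2 * k : ℕ) : ℕ∞)) ∧
  (∀ k ∈ Finset.Icc 1 (ℓ + 1), ∀ b ∈ B k,
      egDist M₁ M₂ S EGV.src (EGV.el b) = ((2 * k - 1 : ℕ) : ℕ∞)) ∧
  (∀ i ∈ Finset.Icc 1 ℓ, ∀ j ∈ Finset.Icc 1 ℓ, i ≠ j → Disjoint (A i) (A j)) ∧
  (∀ i ∈ Finset.Icc 1 (ℓ + 1), ∀ j ∈ Finset.Icc 1 (ℓ + 1), i ≠ j → Disjoint (B i) (B j)) ∧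
  (∀ i ∈ Finset.Icc 1 ℓ, ∀ j ∈ Finset.Icc 1 (ℓ + 1), Disjoint (A i) (B j)) ∧
  (∀ k ∈ Finset.Icc 1 ℓ, (A k).card = w) ∧
  (∀ k ∈ Finset.Icc 1 (ℓ + 1), (B k).card = w) ∧
  M₁.Indep (S ∪ B 1) ∧
  M₂.Indep (S ∪ B (ℓ + 1)) ∧
  (∀ k ∈ Finset.Icc 1 ℓ, M₁.Indep ((S \ A k) ∪ B (k + 1))) ∧
  (∀ k ∈ Finset.Icc 1 ℓ, M₂.Indep ((S \ A k) ∪ B k))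

/-!
Suppose `Π = (A, B)` is maximal and `Π̃ = (A', B')` has width `w' > (2ℓ + 3) w`. Call an element
of `Π̃ \ Π` reachable if it ends a chain `b₁, a₁, b₂, …` of elements of `Π̃ \ Π`, one in each
layer, that can be added to `Π` while keeping the exchange conditions. In the `m`-th layer of the
sequence `B₁, A₁, B₂, …, B_{ℓ+1}` all but at most `(m + 1) w` of the `w'` elements of `Π̃` are
reachable. The step from one layer to the next augments the independent sets of `Π` inside those
of `Π̃` and then counts: an element that the previous layer does not reach is dependent on the
independent set with the reached elements removed (its circuit avoids them), so there are few of
them. In the last layer more than `w` elements are reachable, so one of them extends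
`S + B_{ℓ+1}` in `M₂`, and its chain enlarges `Π`.
-/

open Finset

namespace FinMatroid

variable (M : FinMatroid α) {I J X Y Y' Z G : Finset α} {b : α}

theorem exists_insert_indep (hX : M.Indep X) (hY : M.Indep Y) (hXY : X.card < Y.card) :
    ∃ b ∈ Y \ X, M.Indep (insert b X) := by
  obtain ⟨b, hb, hbX⟩ := M.exchange hX hY hXY
  exact ⟨b, by convert hb, by convert hbX⟩

theorem exists_indep_superset (hX : M.Indep X) (hY : M.Indep Y) :
    ∃ W, X ⊆ W ∧ W ⊆ X ∪ Y ∧ Y.card ≤ W.card ∧ M.Indep W := by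
  induction h : Y.card - X.card generalizing X with
  | zero => exact ⟨X, subset_rfl, subset_union_left, by omega, hX⟩
  | succ n ih =>
    obtain ⟨b, hb, hbX⟩ := M.exists_insert_indep hX hY (by omega)
    rw [mem_sdiff] at hb
    obtain ⟨W, hXW, hWXY, hcard, hW⟩ :=
      ih hbX (by rw [card_insert_of_notMem hb.2]; omega)
    refine ⟨W, (subset_insert _ _).trans hXW, hWXY.trans ?_, hcard, hW⟩
    rw [insert_union]
    exact insert_subset (mem_union_right _ hb.1) subset_rfl

theorem card_le_of_not_indep_insert (hX : M.Indep X) (hW : M.Indep W) (hWX : W ⊆ X ∪ G)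
    (hG : ∀ b ∈ G, b ∉ X → ¬ M.Indep (insert b X)) : W.card ≤ X.card := by
  by_contra! hlt
  obtain ⟨b, hb, hbX⟩ := M.exists_insert_indep hX hW hlt
  rw [mem_sdiff] at hb
  exact hG b ((mem_union.1 (hWX hb.1)).resolve_left hb.2) hb.2 hbX

/-- The circuit of `b` in `X + b` avoids `Z`, hence lies in `X \ Z + b`. -/
theorem not_indep_insert_sdiff (hX : M.Indep X) (hbX : b ∉ X)
    (hdep : ¬ M.Indep (insert b X)) (hexch : ∀ a ∈ Z, ¬ M.Indep ((insert b X).erase a)) :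
    ¬ M.Indep (insert b (X \ Z)) := by
  intro hind
  obtain ⟨W, hsubW, hWsub, hcard, hW⟩ := M.exists_indep_superset hind hX
  have hWbX : W ⊆ insert b X := hWsub.trans (by
    rw [insert_union]
    exact insert_subset_insert _ (union_subset sdiff_subset subset_rfl))
  obtain ⟨a, ha, haW⟩ : ∃ a ∈ insert b X, a ∉ W := by
    by_contra! h
    exact hdep (M.subset_indep hW h)
  have hab : a ≠ b := fun h => haW (h ▸ hsubW (mem_insert_self b _))
  have haX : a ∈ X := (mem_insert.1 ha).resolve_left hab
  have haZ : a ∈ Z := by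
    by_contra haZ
    exact haW (hsubW (mem_insert_of_mem (mem_sdiff.2 ⟨haX, haZ⟩)))
  have hWeq : W = (insert b X).erase a := by
    refine eq_of_subset_of_card_le (fun x hx => mem_erase.2
      ⟨fun h => haW (h ▸ hx), hWbX hx⟩) ?_
    rw [card_erase_of_mem ha, card_insert_of_notMem hbX]
    omega
  exact hexch a haZ (hWeq ▸ hW)

/-- Every `b ∈ G` is spanned by `I \ Z ⊇ J`, so `J ∪ G` is no larger than `I \ Z`. -/
theorem card_add_card_add_card_le (hI : M.Indep I) (hZI : Z ⊆ I) (hJ : J ⊆ I \ Z)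
    (hJG : M.Indep (J ∪ G)) (hGI : Disjoint G I) (hdep : ∀ b ∈ G, ¬ M.Indep (insert b I))
    (hexch : ∀ b ∈ G, ∀ a ∈ Z, ¬ M.Indep ((insert b I).erase a)) :
    J.card + G.card + Z.card ≤ I.card := by
  have hcount := M.card_le_of_not_indep_insert (M.subset_indep hI sdiff_subset) hJG
    (union_subset_union_left hJ) fun b hb _ =>
      M.not_indep_insert_sdiff hI (disjoint_left.1 hGI hb) (hdep b hb) (hexch b hb)
  have hJI : Disjoint J G := disjoint_of_subset_left (hJ.trans sdiff_subset) hGI.symm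
  rw [card_union_of_disjoint hJI, card_sdiff_of_subset hZI] at hcount
  have := card_le_card hZI
  omega

theorem exists_subset_sdiff_indep_union (hY : M.Indep (X ∪ Y)) (hY' : M.Indep (X ∪ Y'))
    (hXY' : Disjoint X Y') :
    ∃ K ⊆ Y' \ Y, Y'.card ≤ Y.card + K.card ∧ M.Indep (X ∪ Y ∪ K) := by
  obtain ⟨W, hsubW, hWsub, hcard, hW⟩ := M.exists_indep_superset hY hY'
  refine ⟨W \ (X ∪ Y), fun x hx => ?_, ?_, ?_⟩
  · have hxW := mem_sdiff.1 hx
    have := hWsub hxW.1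
    simp only [mem_union, mem_sdiff] at this hxW ⊢
    tauto
  · rw [card_sdiff_of_subset hsubW, card_union_of_disjoint hXY'] at *
    have := card_union_le X Y
    have := card_le_card hsubW
    omega
  · rwa [union_sdiff_of_subset hsubW]

theorem card_le_of_not_indep_insert_union (hY : M.Indep (X ∪ Y)) (hY' : M.Indep (X ∪ Y'))
    (hXY' : Disjoint X Y') (hGY' : G ⊆ Y') (hG : ∀ b ∈ G, ¬ M.Indep (insert b (X ∪ Y))) :
    G.card ≤ Y.card := by
  have hXG : Disjoint X G := disjoint_of_subset_right hGY' hXY'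
  have := M.card_le_of_not_indep_insert hY (M.subset_indep hY' (union_subset_union_right
    hGY')) (union_subset_union_left subset_union_left) fun b hb _ => hG b hb
  rw [card_union_of_disjoint hXG] at this
  have := card_union_le X Y
  omega

end FinMatroid

theorem List.IsChain.iff_of_flip {β : Type*} {R : β → β → Prop} {P : β → Prop}
    (hR : ∀ u v, R u v → (P v ↔ ¬ P u)) {u v : β} {l : List β}
    (h : List.IsChain R (u :: (l ++ [v]))) : P v ↔ (P u ↔ Even (l.length + 1)) := by
  induction l generalizing u with
  | nil => simpa using hR u v (List.isChain_pair.1 h)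
  | cons y l ih =>
    rw [List.cons_append, List.isChain_cons_cons] at h
    rw [ih h.2, hR u y h.1, List.length_cons, Nat.even_add_one (n := l.length + 1)]
    tauto

/-- Source and sink are put on the side of `S`, so that every arc of `G(S)` changes side. -/
def EGV.InS (S : Finset α) : EGV α → Prop
  | .el x => x ∈ S
  | _ => True

theorem egAdj_inS_iff {M₁ M₂ : FinMatroid α} {S : Finset α} {u v : EGV α}
    (h : egAdj M₁ M₂ S u v) : v.InS S ↔ ¬ u.InS S := by
  cases u <;> cases v <;> simp only [egAdj, EGV.InS] at h ⊢ <;> tauto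

theorem exists_isChain_of_egDist_eq {M₁ M₂ : FinMatroid α} {S : Finset α} {u v : EGV α} {n : ℕ}
    (h : egDist M₁ M₂ S u v = n) :
    ∃ l : List (EGV α), List.IsChain (egAdj M₁ M₂ S) (u :: (l ++ [v])) ∧ l.length + 1 = n := by
  let T : Set ℕ∞ := {m | ∃ l : List (EGV α),
    List.IsChain (egAdj M₁ M₂ S) (u :: (l ++ [v])) ∧ m = (l.length : ℕ∞) + 1}
  have hT : sInf T = n := h
  have hne : T.Nonempty := Set.nonempty_iff_ne_empty.2 fun hemp => by
    rw [hemp, sInf_empty] at hT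
    exact ENat.top_ne_natCast n hT
  obtain ⟨l, hl, hlen⟩ := hT ▸ csInf_mem hne
  exact ⟨l, hl, by exact_mod_cast hlen.symm⟩

theorem mem_iff_even_of_egDist_eq {M₁ M₂ : FinMatroid α} {S : Finset α} {x : α} {n : ℕ}
    (h : egDist M₁ M₂ S .src (.el x) = n) : x ∈ S ↔ Even n := by
  obtain ⟨l, hl, rfl⟩ := exists_isChain_of_egDist_eq h
  simpa [EGV.InS] using hl.iff_of_flip (P := EGV.InS S) fun _ _ => egAdj_inS_iff

theorem disjoint_of_egDist_ne {M₁ M₂ : FinMatroid α} {S P Q : Finset α} {p q : ℕ}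
    (hP : ∀ x ∈ P, egDist M₁ M₂ S .src (.el x) = p)
    (hQ : ∀ x ∈ Q, egDist M₁ M₂ S .src (.el x) = q) (hpq : p ≠ q) : Disjoint P Q :=
  disjoint_left.2 fun x hxP hxQ => hpq (by exact_mod_cast (hP x hxP).symm.trans (hQ x hxQ))

theorem IsAugSet.of_egDist {M₁ M₂ : FinMatroid α} {S : Finset α} {ℓ w : ℕ} {A B : ℕ → Finset α}
    (hdA : ∀ k ∈ Icc 1 ℓ, ∀ a ∈ A k, egDist M₁ M₂ S .src (.el a) = (2 * k : ℕ))
    (hdB : ∀ k ∈ Icc 1 (ℓ + 1), ∀ b ∈ B k,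
      egDist M₁ M₂ S .src (.el b) = (2 * k - 1 : ℕ))
    (hcA : ∀ k ∈ Icc 1 ℓ, (A k).card = w)
    (hcB : ∀ k ∈ Icc 1 (ℓ + 1), (B k).card = w)
    (hfirst : M₁.Indep (S ∪ B 1)) (hlast : M₂.Indep (S ∪ B (ℓ + 1)))
    (h₁ : ∀ k ∈ Icc 1 ℓ, M₁.Indep ((S \ A k) ∪ B (k + 1)))
    (h₂ : ∀ k ∈ Icc 1 ℓ, M₂.Indep ((S \ A k) ∪ B k)) :
    IsAugSet M₁ M₂ S ℓ w A B := by
  refine ⟨hdA, hdB, fun i hi j hj hij => ?_, fun i hi j hj hij => ?_, fun i hi j hj => ?_,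
    hcA, hcB, hfirst, hlast, h₁, h₂⟩
  · exact disjoint_of_egDist_ne (hdA i hi) (hdA j hj) (by omega)
  · exact disjoint_of_egDist_ne (hdB i hi) (hdB j hj) (by simp only [mem_Icc] at hi hj; omega)
  · exact disjoint_of_egDist_ne (hdA i hi) (hdB j hj) (by simp only [mem_Icc] at hi; omega)

namespace IsAugSet

variable {M₁ M₂ : FinMatroid α} {S : Finset α} {ℓ w w' : ℕ} {A B A' B' : ℕ → Finset α}
  {k j : ℕ}

theorem egDist_A (h : IsAugSet M₁ M₂ S ℓ w A B) (hk : k ∈ Icc 1 ℓ) {a : α}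
    (ha : a ∈ A k) : egDist M₁ M₂ S .src (.el a) = (2 * k : ℕ) :=
  h.1 k hk a ha

theorem egDist_B (h : IsAugSet M₁ M₂ S ℓ w A B) (hk : k ∈ Icc 1 (ℓ + 1)) {b : α}
    (hb : b ∈ B k) : egDist M₁ M₂ S .src (.el b) = (2 * k - 1 : ℕ) :=
  h.2.1 k hk b hb

theorem card_A (h : IsAugSet M₁ M₂ S ℓ w A B) (hk : k ∈ Icc 1 ℓ) : (A k).card = w :=
  h.2.2.2.2.2.1 k hk

theorem card_B (h : IsAugSet M₁ M₂ S ℓ w A B) (hk : k ∈ Icc 1 (ℓ + 1)) :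
    (B k).card = w :=
  h.2.2.2.2.2.2.1 k hk

theorem indep_first (h : IsAugSet M₁ M₂ S ℓ w A B) : M₁.Indep (S ∪ B 1) :=
  h.2.2.2.2.2.2.2.1

theorem indep_last (h : IsAugSet M₁ M₂ S ℓ w A B) : M₂.Indep (S ∪ B (ℓ + 1)) :=
  h.2.2.2.2.2.2.2.2.1

theorem indep₁ (h : IsAugSet M₁ M₂ S ℓ w A B) (hk : k ∈ Icc 1 ℓ) :
    M₁.Indep ((S \ A k) ∪ B (k + 1)) :=
  h.2.2.2.2.2.2.2.2.2.1 k hk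

theorem indep₂ (h : IsAugSet M₁ M₂ S ℓ w A B) (hk : k ∈ Icc 1 ℓ) :
    M₂.Indep ((S \ A k) ∪ B k) :=
  h.2.2.2.2.2.2.2.2.2.2 k hk

theorem A_subset (h : IsAugSet M₁ M₂ S ℓ w A B) (hk : k ∈ Icc 1 ℓ) : A k ⊆ S :=
  fun _ ha => (mem_iff_even_of_egDist_eq (h.egDist_A hk ha)).2 (even_two_mul k)

theorem disjoint_B (h : IsAugSet M₁ M₂ S ℓ w A B) (hk : k ∈ Icc 1 (ℓ + 1)) :
    Disjoint S (B k) := by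
  refine disjoint_right.2 fun b hb hbS => ?_
  obtain ⟨r, hr⟩ := (mem_iff_even_of_egDist_eq (h.egDist_B hk hb)).1 hbS
  rw [mem_Icc] at hk
  omega

theorem card_sdiff_union (h : IsAugSet M₁ M₂ S ℓ w A B) (hk : k ∈ Icc 1 ℓ)
    (hj : j ∈ Icc 1 (ℓ + 1)) : ((S \ A k) ∪ B j).card = S.card := by
  have hAS := h.A_subset hk
  have := card_le_card hAS
  rw [card_union_of_disjoint (disjoint_of_subset_left sdiff_subset (h.disjoint_B hj)),
    card_sdiff_of_subset hAS, h.card_B hj]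
  rw [h.card_A hk] at *
  omega

theorem card_sdiff_union_union_add (h : IsAugSet M₁ M₂ S ℓ w A B)
    (h' : IsAugSet M₁ M₂ S ℓ w' A' B') (hk : k ∈ Icc 1 ℓ) (hj : j ∈ Icc 1 (ℓ + 1)) :
    ((S \ (A k ∪ A' k)) ∪ B j).card + (A' k \ A k).card = S.card := by
  have hAS := union_subset (h.A_subset hk) (h'.A_subset hk)
  rw [card_union_of_disjoint (disjoint_of_subset_left sdiff_subset (h.disjoint_B hj)),
    card_sdiff_of_subset hAS, h.card_B hj]
  have hunion := card_sdiff_add_card (A' k) (A k)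
  rw [union_comm, h.card_A hk] at hunion
  have := card_le_card hAS
  omega

theorem card_add_card_le_card_sdiff (h : IsAugSet M₁ M₂ S ℓ w A B)
    (h' : IsAugSet M₁ M₂ S ℓ w' A' B') (hk : k ∈ Icc 1 ℓ) (hj : j ∈ Icc 1 (ℓ + 1)) {M : FinMatroid α} {G Z : Finset α}
    (hI : M.Indep ((S \ A k) ∪ B j)) (hZ : Z ⊆ A' k \ A k)
    (hG : M.Indep ((S \ (A k ∪ A' k)) ∪ B j ∪ G)) (hGS : Disjoint G S) (hGB : Disjoint G (B j))
    (hdep : ∀ b ∈ G, ¬ M.Indep (insert b ((S \ A k) ∪ B j)))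
    (hexch : ∀ b ∈ G, ∀ a ∈ Z, ¬ M.Indep ((insert b ((S \ A k) ∪ B j)).erase a)) :
    G.card + Z.card ≤ (A' k \ A k).card := by
  have hA'S := h'.A_subset hk
  have hBS := disjoint_right.1 (h.disjoint_B hj)
  have hZI : Z ⊆ (S \ A k) ∪ B j := fun x hx => by
    have := hZ hx
    simp only [mem_union, mem_sdiff] at this ⊢
    exact Or.inl ⟨hA'S this.1, this.2⟩
  have hJ : (S \ (A k ∪ A' k)) ∪ B j ⊆ ((S \ A k) ∪ B j) \ Z := fun x hx => by
    have hxZ : x ∈ Z → x ∈ A' k := fun hx => (mem_sdiff.1 (hZ hx)).1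
    simp only [mem_union, mem_sdiff] at hx ⊢
    rcases hx with ⟨hxS, hxA⟩ | hxB
    · exact ⟨Or.inl ⟨hxS, fun h => hxA (Or.inl h)⟩, fun h => hxA (Or.inr (hxZ h))⟩
    · exact ⟨Or.inr hxB, fun h => hBS hxB (hA'S (hxZ h))⟩
  have hGI : Disjoint G ((S \ A k) ∪ B j) :=
    disjoint_union_right.2 ⟨disjoint_of_subset_right sdiff_subset hGS, hGB⟩
  have := M.card_add_card_add_card_le hI hZI hJ hG hGI hdep hexch
  have := h.card_sdiff_union_union_add h' hk hj
  rw [h.card_sdiff_union hk hj] at *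
  omega

end IsAugSet

theorem sdiff_insert_union_insert {S A B : Finset α} {a b : α} (haB : a ∉ B) (hab : a ≠ b) :
    (S \ insert a A) ∪ insert b B = (insert b ((S \ A) ∪ B)).erase a := by
  ext x
  simp only [mem_union, mem_sdiff, mem_insert, mem_erase]
  grind

/-- A chain `b 1, a 1, b 2, …, a (k-1), b k` of elements of `Π̃ \ Π`, one in each layer, along
which the exchange conditions of an augmenting set hold when the chain is added to `Π`. -/
structure IsPartialChain (M₁ M₂ : FinMatroid α) (S : Finset α) (A B A' B' : ℕ → Finset α)
    (k : ℕ) (a b : ℕ → α) : Prop where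
  mem_B : ∀ i ∈ Icc 1 k, b i ∈ B' i \ B i
  mem_A : ∀ i ∈ Ico 1 k, a i ∈ A' i \ A i
  indep_first : M₁.Indep (insert (b 1) (S ∪ B 1))
  indep₂ : ∀ i ∈ Ico 1 k, M₂.Indep ((insert (b i) ((S \ A i) ∪ B i)).erase (a i))
  indep₁ : ∀ i ∈ Ico 1 k,
    M₁.Indep ((insert (b (i + 1)) ((S \ A i) ∪ B (i + 1))).erase (a i))

section Reach

variable (M₁ M₂ : FinMatroid α) (S : Finset α) (A B A' B' : ℕ → Finset α)

def reachB (k : ℕ) : Finset α :=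
  (B' k \ B k).filter fun y => ∃ a b, IsPartialChain M₁ M₂ S A B A' B' k a b ∧ b k = y

def reachA (k : ℕ) : Finset α :=
  (A' k \ A k).filter fun x => ∃ a b, IsPartialChain M₁ M₂ S A B A' B' k a b ∧
    M₂.Indep ((insert (b k) ((S \ A k) ∪ B k)).erase x)

variable {M₁ M₂ S A B A' B'} {k : ℕ} {x y : α}

theorem reachB_subset : reachB M₁ M₂ S A B A' B' k ⊆ B' k \ B k := filter_subset _ _

theorem reachA_subset : reachA M₁ M₂ S A B A' B' k ⊆ A' k \ A k := filter_subset _ _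

theorem IsPartialChain.extend {a b : ℕ → α} (hc : IsPartialChain M₁ M₂ S A B A' B' k a b)
    (hk : 1 ≤ k) (hx : x ∈ A' k \ A k)
    (hx₂ : M₂.Indep ((insert (b k) ((S \ A k) ∪ B k)).erase x)) (hy : y ∈ B' (k + 1) \ B (k + 1))
    (hy₁ : M₁.Indep ((insert y ((S \ A k) ∪ B (k + 1))).erase x)) :
    IsPartialChain M₁ M₂ S A B A' B' (k + 1) (Function.update a k x)
      (Function.update b (k + 1) y) := by
  have hb : ∀ i ≤ k, Function.update b (k + 1) y i = b i := fun i hi =>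
    Function.update_of_ne (by omega) _ _
  have ha : ∀ i < k, Function.update a k x i = a i := fun i hi =>
    Function.update_of_ne (by omega) _ _
  refine ⟨fun i hi => ?_, fun i hi => ?_, ?_, fun i hi => ?_, fun i hi => ?_⟩
  · rw [mem_Icc] at hi
    rcases (show i ≤ k ∨ i = k + 1 by omega) with hik | rfl
    · rw [hb i hik]; exact hc.mem_B i (mem_Icc.2 ⟨hi.1, hik⟩)
    · rwa [Function.update_self]
  · rw [mem_Ico] at hi
    rcases (show i < k ∨ i = k by omega) with hik | rfl
    · rw [ha i hik]; exact hc.mem_A i (mem_Ico.2 ⟨hi.1, hik⟩)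
    · rwa [Function.update_self]
  · rw [hb 1 hk]; exact hc.indep_first
  · rw [mem_Ico] at hi
    rw [hb i (by omega)]
    rcases (show i < k ∨ i = k by omega) with hik | rfl
    · rw [ha i hik]; exact hc.indep₂ i (mem_Ico.2 ⟨hi.1, hik⟩)
    · rwa [Function.update_self]
  · rw [mem_Ico] at hi
    rcases (show i < k ∨ i = k by omega) with hik | rfl
    · rw [ha i hik, hb (i + 1) hik]; exact hc.indep₁ i (mem_Ico.2 ⟨hi.1, hik⟩)
    · rwa [Function.update_self, Function.update_self]

theorem mem_reachB_one (hy : y ∈ B' 1 \ B 1) (hy₁ : M₁.Indep (insert y (S ∪ B 1))) :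
    y ∈ reachB M₁ M₂ S A B A' B' 1 :=
  mem_filter.2 ⟨hy, fun _ => y, fun _ => y, ⟨by simpa using hy, by simp, hy₁, by simp,
    by simp⟩, rfl⟩

theorem mem_reachB_succ (hk : 1 ≤ k) (hx : x ∈ reachA M₁ M₂ S A B A' B' k)
    (hy : y ∈ B' (k + 1) \ B (k + 1))
    (hy₁ : M₁.Indep ((insert y ((S \ A k) ∪ B (k + 1))).erase x)) :
    y ∈ reachB M₁ M₂ S A B A' B' (k + 1) := by
  obtain ⟨hxA, a, b, hc, hx₂⟩ := mem_filter.1 hx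
  exact mem_filter.2 ⟨hy, _, _, hc.extend hk hxA hx₂ hy hy₁, Function.update_self ..⟩

theorem mem_reachA (hy : y ∈ reachB M₁ M₂ S A B A' B' k) (hx : x ∈ A' k \ A k)
    (hx₂ : M₂.Indep ((insert y ((S \ A k) ∪ B k)).erase x)) :
    x ∈ reachA M₁ M₂ S A B A' B' k := by
  obtain ⟨-, a, b, hc, rfl⟩ := mem_filter.1 hy
  exact mem_filter.2 ⟨hx, a, b, hc, hx₂⟩

end Reach

theorem IsAugSet.insert_chain {M₁ M₂ : FinMatroid α} {S : Finset α} {ℓ w w' : ℕ}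
    {A B A' B' : ℕ → Finset α} {a b : ℕ → α} (h : IsAugSet M₁ M₂ S ℓ w A B)
    (h' : IsAugSet M₁ M₂ S ℓ w' A' B') (hc : IsPartialChain M₁ M₂ S A B A' B' (ℓ + 1) a b)
    (hlast : M₂.Indep (insert (b (ℓ + 1)) (S ∪ B (ℓ + 1)))) :
    IsAugSet M₁ M₂ S ℓ (w + 1) (fun k => insert (a k) (A k)) (fun k => insert (b k) (B k)) := by
  have hA : ∀ k ∈ Icc 1 ℓ, a k ∈ A' k \ A k := fun k hk =>
    hc.mem_A k (by simp only [mem_Icc, mem_Ico] at hk ⊢; omega)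
  have hk₁ : ∀ k ∈ Icc 1 ℓ, k ∈ Icc 1 (ℓ + 1) ∧ k + 1 ∈ Icc 1 (ℓ + 1) ∧
      k ∈ Ico 1 (ℓ + 1) := fun k hk => by
    simp only [mem_Icc, mem_Ico] at hk ⊢; omega
  have hset : ∀ k ∈ Icc 1 ℓ, ∀ j ∈ Icc 1 (ℓ + 1),
      (S \ insert (a k) (A k)) ∪ insert (b j) (B j) =
        (insert (b j) ((S \ A k) ∪ B j)).erase (a k) := fun k hk j hj => by
    have haS : a k ∈ S := h'.A_subset hk (mem_sdiff.1 (hA k hk)).1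
    refine sdiff_insert_union_insert (disjoint_left.1 (h.disjoint_B hj) haS) ?_
    rintro hab
    exact disjoint_left.1 (h'.disjoint_B hj) haS (hab ▸ (mem_sdiff.1 (hc.mem_B j hj)).1)
  refine IsAugSet.of_egDist (fun k hk x hx => ?_) (fun k hk x hx => ?_) (fun k hk => ?_)
    (fun k hk => ?_) ?_ ?_ (fun k hk => ?_) (fun k hk => ?_)
  · rcases mem_insert.1 hx with rfl | hx
    · exact h'.egDist_A hk (mem_sdiff.1 (hA k hk)).1
    · exact h.egDist_A hk hx
  · rcases mem_insert.1 hx with rfl | hx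
    · exact h'.egDist_B hk (mem_sdiff.1 (hc.mem_B k hk)).1
    · exact h.egDist_B hk hx
  · rw [card_insert_of_notMem (mem_sdiff.1 (hA k hk)).2, h.card_A hk]
  · rw [card_insert_of_notMem (mem_sdiff.1 (hc.mem_B k hk)).2, h.card_B hk]
  · rw [union_insert]
    exact hc.indep_first
  · rw [union_insert]
    exact hlast
  · rw [hset k hk (k + 1) (hk₁ k hk).2.1]
    exact hc.indep₁ k (hk₁ k hk).2.2
  · rw [hset k hk k (hk₁ k hk).1]
    exact hc.indep₂ k (hk₁ k hk).2.2

section Counting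

variable {M₁ M₂ : FinMatroid α} {S : Finset α} {ℓ w w' : ℕ} {A B A' B' : ℕ → Finset α}
  {k : ℕ}

theorem card_reachB_one (h : IsAugSet M₁ M₂ S ℓ w A B) (h' : IsAugSet M₁ M₂ S ℓ w' A' B') :
    w' ≤ (reachB M₁ M₂ S A B A' B' 1).card + 2 * w := by
  have h1 : 1 ∈ Icc 1 (ℓ + 1) := by simp
  set G := (B' 1 \ B 1).filter fun y => ¬ M₁.Indep (insert y (S ∪ B 1))
  have hG : G.card ≤ w := h.card_B h1 ▸ M₁.card_le_of_not_indep_insert_union h.indep_first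
    h'.indep_first (h'.disjoint_B h1) (filter_subset _ _ |>.trans sdiff_subset)
    fun y hy => (mem_filter.1 hy).2
  have hsub : B' 1 \ B 1 ⊆ reachB M₁ M₂ S A B A' B' 1 ∪ G := fun y hy => by
    by_cases hy₁ : M₁.Indep (insert y (S ∪ B 1))
    · exact mem_union_left _ (mem_reachB_one hy hy₁)
    · exact mem_union_right _ (mem_filter.2 ⟨hy, hy₁⟩)
  have := card_le_card hsub
  have := card_union_le (reachB M₁ M₂ S A B A' B' 1) G
  have := le_card_sdiff (B 1) (B' 1)
  rw [h.card_B h1, h'.card_B h1] at this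
  omega

theorem card_reachA (h : IsAugSet M₁ M₂ S ℓ w A B) (h' : IsAugSet M₁ M₂ S ℓ w' A' B')
    (hk : k ∈ Icc 1 ℓ) (hB : w' ≤ (reachB M₁ M₂ S A B A' B' k).card + 2 * k * w) :
    w' ≤ (reachA M₁ M₂ S A B A' B' k).card + (2 * k + 1) * w := by
  have hk' : k ∈ Icc 1 (ℓ + 1) := by simp only [mem_Icc] at hk ⊢; omega
  have hmul : (2 * k + 1) * w = 2 * k * w + w := by ring
  set R := reachB M₁ M₂ S A B A' B' k
  set Y := reachA M₁ M₂ S A B A' B' k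
  have hRB' : R ⊆ B' k \ B k := reachB_subset
  have hYP : Y ⊆ A' k \ A k := reachA_subset
  have hcore : S \ (A k ∪ A' k) ⊆ S := sdiff_subset
  obtain ⟨K, hKB', hKcard, hKind⟩ := M₂.exists_subset_sdiff_indep_union
    (M₂.subset_indep (h.indep₂ hk) (union_subset_union_left
      (sdiff_subset_sdiff subset_rfl subset_union_left)))
    (M₂.subset_indep (h'.indep₂ hk) (union_subset_union_left
      (sdiff_subset_sdiff subset_rfl subset_union_right)))
    (disjoint_of_subset_left hcore (h'.disjoint_B hk'))
  -- `K` and `R` are two large subsets of `B' k`, so they meet in many elements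
  have hKR : w' ≤ (K ∩ R).card + (2 * k + 1) * w := by
    have := card_union_add_card_inter K R
    have := card_le_card (union_subset (hKB'.trans sdiff_subset)
      (hRB'.trans sdiff_subset))
    rw [h.card_B hk', h'.card_B hk'] at *
    omega
  have hKRB' : K ∩ R ⊆ B' k \ B k := inter_subset_left.trans hKB'
  by_cases hfull : ∃ y ∈ K ∩ R, M₂.Indep (insert y ((S \ A k) ∪ B k))
  · obtain ⟨y, hy, hy₂⟩ := hfull
    have hYeq : Y = A' k \ A k := hYP.antisymm fun x hx =>
      mem_reachA (inter_subset_right hy) hx (M₂.subset_indep hy₂ (erase_subset _ _))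
    have := le_card_sdiff (A k) (A' k)
    rw [h.card_A hk, h'.card_A hk, ← hYeq] at this
    omega
  · push Not at hfull
    have hcount := h.card_add_card_le_card_sdiff h' hk hk' (h.indep₂ hk)
      (sdiff_subset : (A' k \ A k) \ Y ⊆ _)
      (M₂.subset_indep hKind (union_subset_union_right inter_subset_left))
      (disjoint_of_subset_left (hKRB'.trans sdiff_subset) (h'.disjoint_B hk').symm)
      (disjoint_of_subset_left hKRB' sdiff_disjoint) hfull
      fun y hy x hx hind => (mem_sdiff.1 hx).2
        (mem_reachA (inter_subset_right hy) (mem_sdiff.1 hx).1 hind)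
    rw [card_sdiff_of_subset hYP] at hcount
    have := card_le_card hYP
    omega

theorem card_reachB_succ (h : IsAugSet M₁ M₂ S ℓ w A B) (h' : IsAugSet M₁ M₂ S ℓ w' A' B')
    (hk : k ∈ Icc 1 ℓ) (hA : w' ≤ (reachA M₁ M₂ S A B A' B' k).card + (2 * k + 1) * w)
    (hw : (2 * k + 1) * w < w') :
    w' ≤ (reachB M₁ M₂ S A B A' B' (k + 1)).card + 2 * (k + 1) * w := by
  have hk' : k + 1 ∈ Icc 1 (ℓ + 1) := by simp only [mem_Icc] at hk ⊢; omega
  have hmul : 2 * (k + 1) * w = (2 * k + 1) * w + w := by ring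
  set R := reachB M₁ M₂ S A B A' B' (k + 1)
  set Y := reachA M₁ M₂ S A B A' B' k
  have hYP : Y ⊆ A' k \ A k := reachA_subset
  obtain ⟨x₀, hx₀⟩ : Y.Nonempty := card_pos.1 (by omega)
  have hcore : S \ (A k ∪ A' k) ⊆ S := sdiff_subset
  obtain ⟨K, hKB', hKcard, hKind⟩ := M₁.exists_subset_sdiff_indep_union
    (M₁.subset_indep (h.indep₁ hk) (union_subset_union_left
      (sdiff_subset_sdiff subset_rfl subset_union_left)))
    (M₁.subset_indep (h'.indep₁ hk) (union_subset_union_left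
      (sdiff_subset_sdiff subset_rfl subset_union_right)))
    (disjoint_of_subset_left hcore (h'.disjoint_B hk'))
  have hKRB' : K \ R ⊆ B' (k + 1) \ B (k + 1) := sdiff_subset.trans hKB'
  have hexch : ∀ y ∈ K \ R, ∀ x ∈ Y,
      ¬ M₁.Indep ((insert y ((S \ A k) ∪ B (k + 1))).erase x) := fun y hy x hx hind =>
    (mem_sdiff.1 hy).2 (mem_reachB_succ (mem_Icc.1 hk).1 hx (hKB' (mem_sdiff.1 hy).1) hind)
  have hcount := h.card_add_card_le_card_sdiff h' hk hk' (h.indep₁ hk) hYP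
    (M₁.subset_indep hKind (union_subset_union_right sdiff_subset))
    (disjoint_of_subset_left (hKRB'.trans sdiff_subset) (h'.disjoint_B hk').symm)
    (disjoint_of_subset_left hKRB' sdiff_disjoint)
    (fun y hy hind => hexch y hy x₀ hx₀ (M₁.subset_indep hind (erase_subset _ _))) hexch
  have := card_le_card (sdiff_subset : A' k \ A k ⊆ A' k)
  have := card_sdiff_add_card_inter K R
  have := card_le_card (inter_subset_right : K ∩ R ⊆ R)
  rw [h.card_B hk', h'.card_B hk', h'.card_A hk] at *
  omega

theorem card_reachB (h : IsAugSet M₁ M₂ S ℓ w A B) (h' : IsAugSet M₁ M₂ S ℓ w' A' B')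
    (hw : (2 * ℓ + 1) * w < w') :
    ∀ k ∈ Icc 1 (ℓ + 1), w' ≤ (reachB M₁ M₂ S A B A' B' k).card + 2 * k * w := by
  intro k hk
  induction k with
  | zero => simp at hk
  | succ k ih =>
    rcases Nat.eq_zero_or_pos k with rfl | hk0
    · simpa using card_reachB_one h h'
    have hkℓ : k ∈ Icc 1 ℓ := by simp only [mem_Icc] at hk ⊢; omega
    have hkw : (2 * k + 1) * w ≤ (2 * ℓ + 1) * w :=
      Nat.mul_le_mul_right w (by simp only [mem_Icc] at hkℓ; omega)
    exact card_reachB_succ h h' hkℓ (card_reachA h h' hkℓ (ih (by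
      simp only [mem_Icc] at hkℓ ⊢; omega))) (by omega)

theorem exists_mem_reachB_indep_insert (h : IsAugSet M₁ M₂ S ℓ w A B)
    (h' : IsAugSet M₁ M₂ S ℓ w' A' B') (hw : (2 * ℓ + 3) * w < w') :
    ∃ y ∈ reachB M₁ M₂ S A B A' B' (ℓ + 1), M₂.Indep (insert y (S ∪ B (ℓ + 1))) := by
  have hℓ : ℓ + 1 ∈ Icc 1 (ℓ + 1) := by simp
  have hR := card_reachB h h' (lt_of_le_of_lt (Nat.mul_le_mul_right w (by omega)) hw) _ hℓ
  by_contra! hdep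
  have := h.card_B hℓ ▸ M₂.card_le_of_not_indep_insert_union h.indep_last h'.indep_last
    (h'.disjoint_B hℓ) (reachB_subset.trans sdiff_subset) hdep
  have hmul : (2 * ℓ + 3) * w = 2 * (ℓ + 1) * w + w := by ring
  omega

end Counting

theorem maximal_augset_width_ratio_general (M₁ M₂ : FinMatroid α) (S : Finset α) (ℓ w w' : ℕ)
    (A B A' B' : ℕ → Finset α)
    (h1 : IsAugSet M₁ M₂ S ℓ w A B)
    (h1max : ∀ (w₀ : ℕ) (A₀ B₀ : ℕ → Finset α), IsAugSet M₁ M₂ S ℓ w₀ A₀ B₀ →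
      (∀ k ∈ Finset.Icc 1 ℓ, A k ⊆ A₀ k) → (∀ k ∈ Finset.Icc 1 (ℓ + 1), B k ⊆ B₀ k) →
      (∀ k ∈ Finset.Icc 1 ℓ, A₀ k = A k) ∧ (∀ k ∈ Finset.Icc 1 (ℓ + 1), B₀ k = B k))
    (h2 : IsAugSet M₁ M₂ S ℓ w' A' B') :
    w' ≤ (2 * ℓ + 4) * w := by
  by_contra! hlt
  obtain ⟨y, hy, hy₂⟩ := exists_mem_reachB_indep_insert h1 h2
    (lt_of_le_of_lt (Nat.mul_le_mul_right w (by omega)) hlt)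
  obtain ⟨-, a, b, hc, rfl⟩ := mem_filter.1 hy
  have h1mem : 1 ∈ Icc 1 (ℓ + 1) := by simp
  obtain ⟨-, hB⟩ := h1max _ _ _ (h1.insert_chain h2 hc hy₂)
    (fun _ _ => subset_insert _ _) (fun _ _ => subset_insert _ _)
  exact (mem_sdiff.1 (hc.mem_B 1 h1mem)).2 (hB 1 h1mem ▸ mem_insert_self _ _)

/-- Any two maximal augmenting sets in `G(S)` (shortest `s`–`t` distance `2(ℓ+1)`), of widths
`w` and `w'`, satisfy `w' ≤ (2ℓ + 4)·w`. Maximality of `(A, B)` is expressed as: any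
augmenting set containing it coordinatewise equals it. -/
theorem maximal_augset_width_ratio (M₁ M₂ : FinMatroid α) (S : Finset α) (ℓ w w' : ℕ)
    (A B A' B' : ℕ → Finset α)
    (hS₁ : M₁.Indep S) (hS₂ : M₂.Indep S)
    (hdist : egDist M₁ M₂ S EGV.src EGV.snk = ((2 * (ℓ + 1) : ℕ) : ℕ∞))
    (h1 : IsAugSet M₁ M₂ S ℓ w A B)
    (h1max : ∀ (w₀ : ℕ) (A₀ B₀ : ℕ → Finset α), IsAugSet M₁ M₂ S ℓ w₀ A₀ B₀ →
      (∀ k ∈ Finset.Icc 1 ℓ, A k ⊆ A₀ k) → (∀ k ∈ Finset.Icc 1 (ℓ + 1), B k ⊆ B₀ k) →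
      (∀ k ∈ Finset.Icc 1 ℓ, A₀ k = A k) ∧ (∀ k ∈ Finset.Icc 1 (ℓ + 1), B₀ k = B k))
    (h2 : IsAugSet M₁ M₂ S ℓ w' A' B')
    (h2max : ∀ (w₀ : ℕ) (A₀ B₀ : ℕ → Finset α), IsAugSet M₁ M₂ S ℓ w₀ A₀ B₀ →
      (∀ k ∈ Finset.Icc 1 ℓ, A' k ⊆ A₀ k) → (∀ k ∈ Finset.Icc 1 (ℓ + 1), B' k ⊆ B₀ k) →
      (∀ k ∈ Finset.Icc 1 ℓ, A₀ k = A' k) ∧ (∀ k ∈ Finset.Icc 1 (ℓ + 1), B₀ k = B' k)) :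
    w' ≤ (2 * ℓ + 4) * w :=
  maximal_augset_width_ratio_general M₁ M₂ S ℓ w w' A B A' B' h1 h1max h2
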